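/- arXiv:math/0310053 — 3 statements merged into one kernel-verified Lean document; each statement's English description precedes it below -/
import Mathlib

section
/- Let n be an even positive integer, n = 2m with m ≥ 2, and let k be an integer with 1 ≤ k ≤ 2m - 1, k^2 ≡ 1 (mod 2m), k ≢ 1 (mod 2m), and gcd(2m, k+1) = 2. Then k = m + 1. -/
/-! Write `k + 1 = 2b`; then `gcd(m, b) = 1`, and `2m ∣ (k - 1)(k + 1) = 2(k - 1)b` gives `m ∣ k - 1`.
In the range `1 ≤ k ≤ 2m - 1` this leaves `k = 1` or `k = m + 1`, and `k ≢ 1 (mod 2m)` excludes the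
first. -/

theorem Int.dvd_of_mul_dvd_mul_of_gcd_eq {d : ℕ} {m x y : ℤ} (hd : d ≠ 0)
    (hdvd : (d : ℤ) * m ∣ x * y) (hgcd : Int.gcd (d * m) y = d) : m ∣ x := by
  obtain ⟨b, rfl⟩ : (d : ℤ) ∣ y := hgcd ▸ Int.gcd_dvd_right ..
  have hcop : IsCoprime m b := by
    rw [Int.gcd_mul_left, Int.natAbs_natCast] at hgcd
    exact Int.isCoprime_iff_gcd_eq_one.mpr ((mul_eq_left₀ hd).mp hgcd)
  have hdvd' : (d : ℤ) * m ∣ d * (x * b) := by rwa [mul_left_comm] at hdvd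
  exact hcop.dvd_of_dvd_mul_right ((mul_dvd_mul_iff_left (by exact_mod_cast hd)).mp hdvd')

theorem Int.eq_add_one_of_dvd_sub_one_of_not_two_mul_dvd {m k : ℤ} (hk1 : 1 ≤ k)
    (hk2 : k ≤ 2 * m - 1) (hdvd : m ∣ k - 1) (hne : ¬ 2 * m ∣ k - 1) : k = m + 1 := by
  obtain ⟨c, hc⟩ := hdvd
  have hc0 : 0 ≤ c := by nlinarith
  have hc1 : c < 2 := by nlinarith
  interval_cases c
  · exact absurd (by simp [hc]) hne
  · linarith

theorem stmt_5_general (m : ℕ) (k : ℤ)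
    (hk1 : 1 ≤ k) (hk2 : k ≤ 2 * (m : ℤ) - 1)
    (hsq : (2 * (m : ℤ)) ∣ k ^ 2 - 1)
    (hne : ¬ (2 * (m : ℤ)) ∣ k - 1)
    (hgcd : Int.gcd (2 * (m : ℤ)) (k + 1) = 2) :
    k = (m : ℤ) + 1 := by
  have hfactor : (2 * (m : ℤ)) ∣ (k - 1) * (k + 1) := by
    convert hsq using 1
    ring
  have hm : (m : ℤ) ∣ k - 1 :=
    Int.dvd_of_mul_dvd_mul_of_gcd_eq (d := 2) two_ne_zero hfactor hgcd
  exact Int.eq_add_one_of_dvd_sub_one_of_not_two_mul_dvd hk1 hk2 hm hne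

theorem stmt_5 (m : ℕ) (hm : 2 ≤ m) (k : ℤ)
    (hk1 : 1 ≤ k) (hk2 : k ≤ 2 * (m : ℤ) - 1)
    (hsq : (2 * (m : ℤ)) ∣ k ^ 2 - 1)
    (hne : ¬ (2 * (m : ℤ)) ∣ k - 1)
    (hgcd : Int.gcd (2 * (m : ℤ)) (k + 1) = 2) :
    k = (m : ℤ) + 1 :=
  stmt_5_general m k hk1 hk2 hsq hne hgcd
end

section
/- Let n be a positive integer and k_1, ..., k_m positive integers with each k_i < n, k_1 + ⋯ + k_m ≡ 0 (mod n), and gcd(n, k_1, ..., k_m) = 1. Then n = lcm(n/gcd(n,k_1), ..., n/gcd(n,k_m)), and moreover for each index i, n equals the lcm of the numbers n/gcd(n,k_j) for j ≠ i. -/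
/-!
Write `f j = n / gcd(n, k_j)`. Each `f j` divides `n`, so it suffices to show that every prime
power `p ^ a ∣ n` divides the lcm. If `p ∤ k_j`, then `gcd(n, k_j)` is prime to `p`, so
`p ^ a ∣ f j`. Since `gcd(n, k_1, …, k_m) = 1`, some `k_j` is prime to `p`; and as
`p ∣ n ∣ ∑ k_j`, if all `k_j` with `j ≠ i` were divisible by `p`, so would be `k_i`.
Hence such a `j` exists even after removing any single index `i`.
-/

namespace Nat

variable {ι : Type*}

theorem div_gcd_dvd (n k : ℕ) : n / gcd n k ∣ n :=
  div_dvd_of_dvd (gcd_dvd_left n k)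

theorem pow_dvd_div_gcd_of_not_dvd {p a n k : ℕ} (hp : p.Prime) (hpa : p ^ a ∣ n)
    (hpk : ¬ p ∣ k) : p ^ a ∣ n / gcd n k := by
  have hcop : Coprime (p ^ a) (gcd n k) :=
    Coprime.pow_left a <| (Prime.coprime_iff_not_dvd hp).mpr
      fun h => hpk (h.trans (gcd_dvd_right n k))
  refine hcop.dvd_of_dvd_mul_left ?_
  rwa [Nat.mul_div_cancel' (gcd_dvd_left n k)]

theorem finset_lcm_div_gcd_dvd (s : Finset ι) (n : ℕ) (k : ι → ℕ) :
    s.lcm (fun j => n / gcd n (k j)) ∣ n :=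
  Finset.lcm_dvd fun j _ => div_gcd_dvd n (k j)

theorem dvd_finset_lcm_div_gcd {s : Finset ι} {n : ℕ} {k : ι → ℕ}
    (h : ∀ p, p.Prime → p ∣ n → ∃ j ∈ s, ¬ p ∣ k j) :
    n ∣ s.lcm (fun j => n / gcd n (k j)) := by
  rw [dvd_iff_prime_pow_dvd_dvd]
  intro p a hp hpa
  rcases a.eq_zero_or_pos with rfl | ha
  · simp
  obtain ⟨j, hj, hpk⟩ := h p hp ((dvd_pow_self p ha.ne').trans hpa)
  exact (pow_dvd_div_gcd_of_not_dvd hp hpa hpk).trans (Finset.dvd_lcm hj)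

theorem exists_not_dvd_of_gcd_finset_gcd_eq_one {s : Finset ι} {n p : ℕ} {k : ι → ℕ}
    (hgcd : gcd n (s.gcd k) = 1) (hp : p.Prime) (hpn : p ∣ n) : ∃ j ∈ s, ¬ p ∣ k j := by
  by_contra! hall
  have : p ∣ 1 := hgcd ▸ dvd_gcd hpn (Finset.dvd_gcd hall)
  exact hp.one_lt.ne' (dvd_one.mp this)

theorem exists_mem_erase_not_dvd [DecidableEq ι] {s : Finset ι} {n p : ℕ} {k : ι → ℕ} {i : ι} (hi : i ∈ s)
    (hsum : n ∣ ∑ j ∈ s, k j) (hgcd : gcd n (s.gcd k) = 1) (hp : p.Prime) (hpn : p ∣ n) :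
    ∃ j ∈ s.erase i, ¬ p ∣ k j := by
  by_contra! hrest
  have hki : p ∣ k i := by
    have htotal : p ∣ k i + ∑ j ∈ s.erase i, k j :=
      Finset.add_sum_erase s k hi ▸ hpn.trans hsum
    exact (Nat.dvd_add_left (Finset.dvd_sum hrest)).mp htotal
  obtain ⟨j, hj, hpk⟩ := exists_not_dvd_of_gcd_finset_gcd_eq_one hgcd hp hpn
  rcases eq_or_ne j i with rfl | hji
  · exact hpk hki
  · exact hpk (hrest j (Finset.mem_erase.mpr ⟨hji, hj⟩))

end Nat

theorem stmt_9_general (n m : ℕ) (k : Fin m → ℕ)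
    (hsum : n ∣ ∑ i, k i)
    (hgcd : Nat.gcd n (Finset.univ.gcd k) = 1) :
    n = Finset.univ.lcm (fun i => n / Nat.gcd n (k i)) ∧
      ∀ i : Fin m, n = (Finset.univ.erase i).lcm (fun j => n / Nat.gcd n (k j)) := by
  refine ⟨?_, fun i => ?_⟩
  · exact Nat.dvd_antisymm
      (Nat.dvd_finset_lcm_div_gcd fun _ hp hpn =>
        Nat.exists_not_dvd_of_gcd_finset_gcd_eq_one hgcd hp hpn)
      (Nat.finset_lcm_div_gcd_dvd _ n k)
  · exact Nat.dvd_antisymm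
      (Nat.dvd_finset_lcm_div_gcd fun _ hp hpn =>
        Nat.exists_mem_erase_not_dvd (Finset.mem_univ i) hsum hgcd hp hpn)
      (Nat.finset_lcm_div_gcd_dvd _ n k)

theorem stmt_9 (n m : ℕ) (hn : 0 < n) (k : Fin m → ℕ)
    (hk : ∀ i, 0 < k i ∧ k i < n)
    (hsum : n ∣ ∑ i, k i)
    (hgcd : Nat.gcd n (Finset.univ.gcd k) = 1) :
    n = Finset.univ.lcm (fun i => n / Nat.gcd n (k i)) ∧
      ∀ i : Fin m, n = (Finset.univ.erase i).lcm (fun j => n / Nat.gcd n (k j)) :=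
  stmt_9_general n m k hsum hgcd
end

section
/- Let n = d·m with d ≥ 2, m ≥ 1. In the group G with presentation ⟨s, t, u | s^d = t^n = u^2 = [s,t] = [s,u] = 1, (ut)^2 = s^{-1}⟩, the element s is central, the subgroup ⟨s⟩ has order d, and G/⟨s⟩ is isomorphic to the dihedral group of order 2n. -/
open scoped commutatorElement

/-- Relators for the presentation
`⟨s, t, u | s^d = t^n = u² = [s,t] = [s,u] = 1, (ut)² = s⁻¹⟩`,
with `s, t, u` the generators `0, 1, 2` of `Fin 3`. -/
def stmt18Rels (d n : ℕ) : Set (FreeGroup (Fin 3)) :=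
  {FreeGroup.of (0 : Fin 3) ^ d, FreeGroup.of (1 : Fin 3) ^ n, FreeGroup.of (2 : Fin 3) ^ 2,
    ⁅FreeGroup.of (0 : Fin 3), FreeGroup.of (1 : Fin 3)⁆, ⁅FreeGroup.of (0 : Fin 3), FreeGroup.of (2 : Fin 3)⁆,
    (FreeGroup.of (2 : Fin 3) * FreeGroup.of (1 : Fin 3)) ^ 2 * FreeGroup.of (0 : Fin 3)}

/-!
The relations say that `s` commutes with both other generators, so `s` is central, and
`s ^ d = 1` bounds its order by `d`. The order is exactly `d` because `G` maps onto the semidirect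
product `(ZMod d × ZMod (d * m)) ⋊ ℤ/2`, with `s, t, u ↦ (1, 0), (0, 1)` and the involution, where
the image of `s` has order `d`. Killing `s` leaves `⟨t, u | t ^ n = u ^ 2 = (u t) ^ 2 = 1⟩`: the
maps `G → D_n` and `D_n → G/⟨s⟩` defined by the two presentations are mutually inverse.
-/

theorem zpow_eq_zpow_of_intCast_eq {H : Type*} [Group H] {n : ℕ} {T : H} (hT : T ^ n = 1)
    {a b : ℤ} (h : (a : ZMod n) = b) : T ^ a = T ^ b :=
  zpow_eq_zpow_iff_modEq.2 <| ((ZMod.intCast_eq_intCast_iff a b n).1 h).of_dvd <|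
    Int.natCast_dvd_natCast.2 (orderOf_dvd_of_pow_eq_one hT)

namespace DihedralGroup

variable {n : ℕ} {H : Type*} [Group H]

theorem hom_ext {f g : DihedralGroup n →* H} (hr : f (r 1) = g (r 1)) (hsr : f (sr 0) = g (sr 0)) :
    f = g := by
  have hr_eq (i : ZMod n) : r i = r 1 ^ (i.cast : ℤ) := by
    rw [r_one_zpow, ZMod.intCast_zmod_cast]
  ext (i | i)
  · rw [hr_eq, map_zpow, map_zpow, hr]
  · rw [← zero_add i, ← sr_mul_r, hr_eq, map_mul, map_mul, map_zpow, map_zpow, hr, hsr]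

def lift {T U : H} (hT : T ^ n = 1) (hU : U ^ 2 = 1) (hUT : (U * T) ^ 2 = 1) :
    DihedralGroup n →* H where
  toFun
    | r i => T ^ (i.cast : ℤ)
    | sr i => U * T ^ (i.cast : ℤ)
  map_one' := by
    show T ^ ((0 : ZMod n).cast : ℤ) = 1
    rw [ZMod.cast_zero, zpow_zero]
  map_mul' := by
    have hpow {i : ZMod n} {a : ℤ} (h : (a : ZMod n) = i) : T ^ (i.cast : ℤ) = T ^ a :=
      zpow_eq_zpow_of_intCast_eq hT (by rw [ZMod.intCast_zmod_cast, h])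
    have hUinv : U⁻¹ = U := inv_eq_of_mul_eq_one_right (by rwa [← sq])
    have hswap (a : ℤ) : T ^ a * U = U * T ^ (-a) := by
      have hconj : U * T * U⁻¹ = T⁻¹ := by
        rw [hUinv]; exact eq_inv_of_mul_eq_one_left (by simpa only [sq, mul_assoc] using hUT)
      rw [zpow_neg, ← inv_zpow, ← hconj, conj_zpow, ← mul_assoc, ← mul_assoc, hUinv, ← sq, hU,
        one_mul]
    rintro (i | i) (j | j)
    · show T ^ _ = T ^ _ * T ^ _
      rw [← zpow_add]; exact hpow (by push_cast [ZMod.intCast_zmod_cast]; rfl)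
    · show U * T ^ _ = T ^ _ * (U * T ^ _)
      rw [← mul_assoc, hswap, mul_assoc, ← zpow_add]
      exact congrArg _ (hpow (by push_cast [ZMod.intCast_zmod_cast]; ring))
    · show U * T ^ _ = U * T ^ _ * T ^ _
      rw [mul_assoc, ← zpow_add]
      exact congrArg _ (hpow (by push_cast [ZMod.intCast_zmod_cast]; rfl))
    · show T ^ _ = U * T ^ _ * (U * T ^ _)
      rw [mul_assoc, ← mul_assoc (T ^ _), hswap, mul_assoc, ← mul_assoc, ← sq, hU, one_mul,
        ← zpow_add]
      exact hpow (by push_cast [ZMod.intCast_zmod_cast]; ring)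

variable {T U : H} (hT : T ^ n = 1) (hU : U ^ 2 = 1) (hUT : (U * T) ^ 2 = 1)

@[simp] theorem lift_r_one : lift hT hU hUT (r 1) = T :=
  (zpow_eq_zpow_of_intCast_eq hT (by rw [ZMod.intCast_zmod_cast, Int.cast_one])).trans (zpow_one T)

@[simp] theorem lift_sr_zero : lift hT hU hUT (sr 0) = U := by
  show U * T ^ ((0 : ZMod n).cast : ℤ) = U
  rw [ZMod.cast_zero, zpow_zero, mul_one]

end DihedralGroup

theorem PresentedGroup.lift_of_eq_one {α : Type*} {rels : Set (FreeGroup α)} {r : FreeGroup α}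
    (hr : r ∈ rels) : FreeGroup.lift (PresentedGroup.of (rels := rels)) r = 1 := by
  rw [show FreeGroup.lift PresentedGroup.of = PresentedGroup.mk rels from
    FreeGroup.ext_hom _ _ fun _ => rfl]
  exact PresentedGroup.one_of_mem hr

theorem PresentedGroup.mem_center_of_forall_commute {α : Type*} {rels : Set (FreeGroup α)}
    {g : PresentedGroup rels} (h : ∀ x, Commute g (PresentedGroup.of x)) :
    g ∈ Subgroup.center (PresentedGroup rels) := by
  rw [← Subgroup.centralizer_univ, ← Subgroup.coe_top, ← PresentedGroup.closure_range_of,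
    Subgroup.centralizer_closure, Subgroup.mem_centralizer_iff]
  rintro _ ⟨x, rfl⟩
  exact (h x).eq.symm

namespace stmt18Rels

variable {d n : ℕ}

theorem forall_lift_eq_one_iff {H : Type*} [Group H] (f : Fin 3 → H) :
    (∀ r ∈ stmt18Rels d n, FreeGroup.lift f r = 1) ↔
      f 0 ^ d = 1 ∧ f 1 ^ n = 1 ∧ f 2 ^ 2 = 1 ∧ Commute (f 0) (f 1) ∧ Commute (f 0) (f 2) ∧
        (f 2 * f 1) ^ 2 * f 0 = 1 := by
  simp [stmt18Rels, map_commutatorElement, commutatorElement_eq_one_iff_commute]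

theorem relations :
    let s : PresentedGroup (stmt18Rels d n) := .of 0
    let t : PresentedGroup (stmt18Rels d n) := .of 1
    let u : PresentedGroup (stmt18Rels d n) := .of 2
    s ^ d = 1 ∧ t ^ n = 1 ∧ u ^ 2 = 1 ∧ Commute s t ∧ Commute s u ∧ (u * t) ^ 2 * s = 1 :=
  (forall_lift_eq_one_iff _).1 fun _ => PresentedGroup.lift_of_eq_one

theorem of_zero_mem_center : (.of 0 : PresentedGroup (stmt18Rels d n)) ∈ Subgroup.center _ := by
  obtain ⟨-, -, -, hst, hsu, -⟩ := relations (d := d) (n := n)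
  refine PresentedGroup.mem_center_of_forall_commute fun x => ?_
  fin_cases x
  exacts [Commute.refl _, hst, hsu]

end stmt18Rels

/-- `(ZMod d × ZMod (d * m)) ⋊ ℤ/2`, the flag `e` recording the `ℤ/2` component, which acts by
`(a, b) ↦ (a - b, -b)`. -/
@[ext] structure DihedralExt (d m : ℕ) where
  a : ZMod d
  b : ZMod (d * m)
  e : Bool

namespace DihedralExt

variable {d m : ℕ}

instance : Mul (DihedralExt d m) :=
  ⟨fun x y => ⟨x.a + y.a + (if x.e then -ZMod.castHom (dvd_mul_right d m) _ y.b else 0),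
    x.b + (if x.e then -y.b else y.b), xor x.e y.e⟩⟩

instance : One (DihedralExt d m) := ⟨⟨0, 0, false⟩⟩

instance : Inv (DihedralExt d m) :=
  ⟨fun x => if x.e then ⟨-x.a + ZMod.castHom (dvd_mul_right d m) _ x.b, x.b, true⟩
    else ⟨-x.a, -x.b, false⟩⟩

@[simp] theorem mul_def (x y : DihedralExt d m) :
    x * y = ⟨x.a + y.a + (if x.e then -ZMod.castHom (dvd_mul_right d m) _ y.b else 0),
      x.b + (if x.e then -y.b else y.b), xor x.e y.e⟩ := rfl

@[simp] theorem one_def : (1 : DihedralExt d m) = ⟨0, 0, false⟩ := rfl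

@[simp] theorem inv_def (x : DihedralExt d m) :
    x⁻¹ = if x.e then ⟨-x.a + ZMod.castHom (dvd_mul_right d m) _ x.b, x.b, true⟩
      else ⟨-x.a, -x.b, false⟩ := rfl

instance : Group (DihedralExt d m) where
  mul_assoc := by
    rintro ⟨a₁, b₁, e₁⟩ ⟨a₂, b₂, e₂⟩ ⟨a₃, b₃, e₃⟩
    cases e₁ <;> cases e₂ <;> cases e₃ <;> simp <;> constructor <;> ring
  one_mul := by rintro ⟨a, b, e⟩; simp
  mul_one := by rintro ⟨a, b, e⟩; cases e <;> simp
  inv_mul_cancel := by rintro ⟨a, b, e⟩; cases e <;> simp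

theorem mk_false_pow (a : ZMod d) (b : ZMod (d * m)) (k : ℕ) :
    (⟨a, b, false⟩ : DihedralExt d m) ^ k = ⟨k • a, k • b, false⟩ := by
  induction k with
  | zero => simp
  | succ k ih => simp [pow_succ, ih, add_smul]

theorem orderOf_mk_one_zero_false : orderOf (⟨1, 0, false⟩ : DihedralExt d m) = d :=
  Nat.dvd_right_iff_eq.1 fun k => by
    simp [orderOf_dvd_iff_pow_eq_one, mk_false_pow, DihedralExt.ext_iff, ZMod.natCast_eq_zero_iff]

theorem forall_lift_stmt18Rels_eq_one :
    ∀ r ∈ stmt18Rels d (d * m),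
      FreeGroup.lift ![(⟨1, 0, false⟩ : DihedralExt d m), ⟨0, 1, false⟩, ⟨0, 0, true⟩] r = 1 := by
  refine (stmt18Rels.forall_lift_eq_one_iff _).2 ⟨?_, ?_, ?_, ?_, ?_, ?_⟩ <;>
    simp [mk_false_pow, sq, Commute, SemiconjBy]

end DihedralExt

namespace stmt18Rels

variable (d n : ℕ)

def toDihedral : PresentedGroup (stmt18Rels d n) →* DihedralGroup n :=
  PresentedGroup.toGroup (f := ![1, .r 1, .sr 0]) <| (forall_lift_eq_one_iff _).2 <| by
    simp [sq, DihedralGroup.sr_mul_r]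

@[simp] theorem mk_of_zero :
    (QuotientGroup.mk (.of 0) :
      PresentedGroup (stmt18Rels d n) ⧸ Subgroup.normalClosure {.of (0 : Fin 3)}) = 1 :=
  (QuotientGroup.eq_one_iff _).2 (Subgroup.subset_normalClosure rfl)

theorem quotient_relations :
    let π := QuotientGroup.mk' (Subgroup.normalClosure {PresentedGroup.of (0 : Fin 3)} :
      Subgroup (PresentedGroup (stmt18Rels d n)))
    π (.of 1) ^ n = 1 ∧ π (.of 2) ^ 2 = 1 ∧ (π (.of 2) * π (.of 1)) ^ 2 = 1 := by
  intro π
  obtain ⟨-, ht, hu, -, -, hut⟩ := relations (d := d) (n := n)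
  refine ⟨by rw [← map_pow, ht, map_one], by rw [← map_pow, hu, map_one], ?_⟩
  simpa [π] using congrArg π hut

def ofDihedral :
    DihedralGroup n →* PresentedGroup (stmt18Rels d n) ⧸ Subgroup.normalClosure {.of 0} :=
  DihedralGroup.lift (quotient_relations d n).1 (quotient_relations d n).2.1
    (quotient_relations d n).2.2

def quotientEquivDihedral :
    PresentedGroup (stmt18Rels d n) ⧸ Subgroup.normalClosure {.of 0} ≃* DihedralGroup n :=
  MonoidHom.toMulEquiv
    (QuotientGroup.lift _ (toDihedral d n) <| Subgroup.normalClosure_le_normal <| by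
      simp [toDihedral])
    (ofDihedral d n)
    (QuotientGroup.monoidHom_ext _ <| PresentedGroup.ext fun x => by
      fin_cases x <;> simp [toDihedral, ofDihedral])
    (DihedralGroup.hom_ext (by simp [toDihedral, ofDihedral]) (by simp [toDihedral, ofDihedral]))

theorem orderOf_of_zero (m : ℕ) :
    orderOf (.of 0 : PresentedGroup (stmt18Rels d (d * m))) = d := by
  refine Nat.dvd_antisymm (orderOf_dvd_of_pow_eq_one relations.1) ?_
  simpa [DihedralExt.orderOf_mk_one_zero_false] using
    orderOf_map_dvd (PresentedGroup.toGroup DihedralExt.forall_lift_stmt18Rels_eq_one) (.of 0)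

end stmt18Rels

theorem stmt_18_general (d m n : ℕ) (hn : n = d * m) :
    let G := PresentedGroup (stmt18Rels d n)
    let s : G := PresentedGroup.of (0 : Fin 3)
    Subgroup.zpowers s ≤ Subgroup.center G ∧
      Nat.card (Subgroup.zpowers s) = d ∧
      Nonempty ((G ⧸ Subgroup.normalClosure {s}) ≃* DihedralGroup n) := by
  subst hn
  exact ⟨Subgroup.zpowers_le.2 stmt18Rels.of_zero_mem_center,
    by rw [Nat.card_zpowers, stmt18Rels.orderOf_of_zero],
    ⟨stmt18Rels.quotientEquivDihedral d (d * m)⟩⟩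

theorem stmt_18 (d m n : ℕ) (hd : 2 ≤ d) (hm : 1 ≤ m) (hn : n = d * m) :
    let G := PresentedGroup (stmt18Rels d n)
    let s : G := PresentedGroup.of (0 : Fin 3)
    Subgroup.zpowers s ≤ Subgroup.center G ∧
      Nat.card (Subgroup.zpowers s) = d ∧
      Nonempty ((G ⧸ Subgroup.normalClosure {s}) ≃* DihedralGroup n) :=
  stmt_18_general d m n hn
end
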